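/- arXiv:2108.09654 — 3 statements merged into one kernel-verified Lean document; each statement's English description precedes it below -/
import Mathlib

section
/- Exponential decay by induction on scales: let γ ∈ (0,1/2), κ > 0 with κ < log 2 / |log γ|, and let θ : (0,∞) → [0,1] satisfy θ(r) ≤ C_0 exp(−r^κ/C_0) + M·θ(γr)^2 for all r ≥ r_0, for some constants C_0, M, r_0 > 0, together with the a priori bound θ(r) ≤ δ for all r ≥ r_0 where M·δ ≤ 1/2 and δ ≤ 1. Then there exists C_1 > 0 such that θ(r) ≤ C_1 exp(−r^κ/C_1) for all r > 0. -/
/-!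
Put `u = M θ`, so that `u ≤ 1/2` beyond `r₀` and `u r ≤ M C₀ exp (-r^κ/C₀) + u (γ r)^2`.
The condition on `κ` says exactly that `ρ = γ⁻¹ ^ κ < 2`. With `b = log 2`, induction on `n` gives
`u ≤ exp (-b ρⁿ)` beyond the scale `γ⁻ⁿ R`: squaring the bound at scale `n` yields
`exp (-2 b ρⁿ) ≤ exp (-(2 - ρ) b) · exp (-b ρⁿ⁺¹)`, and for `R` large the forcing term at scale
`n + 1`, which is at most `M C₀ exp (-ρⁿ⁺¹ R^κ / C₀)`, fits into the remaining fraction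
`1 - exp (-(2 - ρ) b)` of `exp (-b ρⁿ⁺¹)`. Since `ρⁿ` is comparable to `r^κ` between consecutive
scales, this is a stretched exponential bound in `r`; below `R` the bound `θ ≤ 1` suffices.
-/

open Real Filter

theorem inv_rpow_lt_two_of_lt_log_two_div {γ κ : ℝ} (hγ0 : 0 < γ) (hγ1 : γ < 1)
    (hκ : κ < log 2 / |log γ|) : γ⁻¹ ^ κ < 2 := by
  have hlog : 0 < -log γ := neg_pos.mpr (log_neg hγ0 hγ1)
  rw [abs_of_neg (neg_pos.mp hlog), lt_div_iff₀ hlog] at hκ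
  calc γ⁻¹ ^ κ = exp (κ * -log γ) := by
        rw [rpow_def_of_pos (inv_pos.mpr hγ0), log_inv, mul_comm]
    _ < exp (log 2) := exp_lt_exp.mpr hκ
    _ = 2 := exp_log two_pos

theorem pow_mul_rpow {x y : ℝ} (hx : 0 ≤ x) (hy : 0 ≤ y) (κ : ℝ) (n : ℕ) :
    (x ^ n * y) ^ κ = (x ^ κ) ^ n * y ^ κ := by
  rw [mul_rpow (pow_nonneg hx n) hy, rpow_pow_comm hx]

theorem sq_exp_neg_mul_le {b ρ x : ℝ} (hb : 0 ≤ b) (hρ : ρ ≤ 2) (hx : 1 ≤ x) :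
    exp (-(b * x)) ^ 2 ≤ exp (-((2 - ρ) * b)) * exp (-(b * (x * ρ))) := by
  rw [sq, ← exp_add, ← exp_add, exp_le_exp]
  nlinarith [mul_nonneg (mul_nonneg (sub_nonneg.mpr hρ) hb) (sub_nonneg.mpr hx)]

theorem mul_exp_neg_le_mul_exp_neg {A ε C b s t : ℝ} (hA : 0 < A) (hε : 0 < ε) (hC : 0 < C)
    (hs : C * (b + |log (A / ε)|) ≤ s) (ht : 1 ≤ t) :
    A * exp (-(t * s) / C) ≤ ε * exp (-(b * t)) := by
  have hgap : |log (A / ε)| ≤ s / C - b := by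
    rw [le_sub_iff_add_le', le_div_iff₀ hC]; linarith
  have hA_eq : A = ε * exp (log (A / ε)) := by
    rw [exp_log (div_pos hA hε)]; field_simp
  rw [hA_eq, mul_assoc, ← exp_add]
  gcongr
  have hlog : log (A / ε) ≤ t * (s / C - b) :=
    (le_abs_self _).trans (hgap.trans (le_mul_of_one_le_left ((abs_nonneg _).trans hgap) ht))
  rw [neg_div, mul_div_assoc]
  linarith [mul_sub t (s / C) b]

theorem le_exp_neg_mul_pow_of_le_sq {u : ℝ → ℝ} {γ R ρ b : ℝ} (hγ0 : 0 < γ) (hR : 0 < R)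
    (hρ1 : 1 ≤ ρ) (hρ2 : ρ ≤ 2) (hb : 0 ≤ b) (hu0 : ∀ r > 0, 0 ≤ u r)
    (hbase : ∀ r ≥ R, u r ≤ exp (-b))
    (hrec : ∀ n : ℕ, ∀ r ≥ γ⁻¹ ^ (n + 1) * R,
      u r ≤ (1 - exp (-((2 - ρ) * b))) * exp (-(b * ρ ^ (n + 1))) + u (γ * r) ^ 2) :
    ∀ n : ℕ, ∀ r ≥ γ⁻¹ ^ n * R, u r ≤ exp (-(b * ρ ^ n)) := by
  intro n
  induction n with
  | zero => simpa using hbase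
  | succ n ih =>
    intro r hr
    have hγr : γ⁻¹ ^ n * R ≤ γ * r := by
      calc γ⁻¹ ^ n * R = γ * (γ⁻¹ ^ (n + 1) * R) := by
            rw [pow_succ', ← mul_assoc, ← mul_assoc, mul_inv_cancel₀ hγ0.ne', one_mul]
        _ ≤ γ * r := by gcongr
    have hsq : u (γ * r) ^ 2 ≤ exp (-(b * ρ ^ n)) ^ 2 :=
      pow_le_pow_left₀ (hu0 _ ((by positivity : 0 < γ⁻¹ ^ n * R).trans_le hγr)) (ih _ hγr) 2
    calc u r ≤ (1 - exp (-((2 - ρ) * b))) * exp (-(b * ρ ^ (n + 1))) + u (γ * r) ^ 2 :=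
          hrec n r hr
      _ ≤ (1 - exp (-((2 - ρ) * b))) * exp (-(b * ρ ^ (n + 1)))
          + exp (-((2 - ρ) * b)) * exp (-(b * ρ ^ (n + 1))) := by
          rw [pow_succ]; gcongr; exact hsq.trans (sq_exp_neg_mul_le hb hρ2 (one_le_pow₀ hρ1))
      _ = exp (-(b * ρ ^ (n + 1))) := by ring

theorem le_exp_neg_mul_rpow_of_le_on_scales {u : ℝ → ℝ} {γ κ R b : ℝ} (hγ0 : 0 < γ)
    (hγ1 : γ < 1) (hκ : 0 ≤ κ) (hR : 0 < R) (hb : 0 ≤ b)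
    (hscales : ∀ n : ℕ, ∀ r ≥ γ⁻¹ ^ n * R, u r ≤ exp (-(b * (γ⁻¹ ^ κ) ^ n))) :
    ∀ r ≥ R, u r ≤ exp (-(b / (γ⁻¹ ^ κ * R ^ κ) * r ^ κ)) := by
  intro r hr
  have hig : 1 < γ⁻¹ := one_lt_inv₀ hγ0 |>.mpr hγ1
  obtain ⟨n, hlow, hup⟩ := exists_nat_pow_near ((one_le_div hR).mpr hr) hig
  rw [le_div_iff₀ hR] at hlow
  rw [div_lt_iff₀ hR] at hup
  have hrκ : r ^ κ ≤ (γ⁻¹ ^ κ) ^ (n + 1) * R ^ κ := by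
    rw [← pow_mul_rpow (inv_pos.mpr hγ0).le hR.le]
    exact rpow_le_rpow (hR.le.trans hr) hup.le hκ
  have hρ : 0 < γ⁻¹ ^ κ := rpow_pos_of_pos (inv_pos.mpr hγ0) κ
  have hRκ : 0 < R ^ κ := rpow_pos_of_pos hR κ
  refine (hscales n r hlow).trans (exp_le_exp.mpr (neg_le_neg ?_))
  calc b / (γ⁻¹ ^ κ * R ^ κ) * r ^ κ
      ≤ b / (γ⁻¹ ^ κ * R ^ κ) * ((γ⁻¹ ^ κ) ^ (n + 1) * R ^ κ) := by gcongr
    _ = b * (γ⁻¹ ^ κ) ^ n := by field_simp; ring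

theorem exists_le_exp_neg_mul_rpow_of_le_sq {u : ℝ → ℝ} {γ κ A C₀ r₀ : ℝ} (hγ0 : 0 < γ)
    (hγ1 : γ < 1) (hκ0 : 0 < κ) (hρ : γ⁻¹ ^ κ < 2) (hA : 0 < A) (hC₀ : 0 < C₀)
    (hu0 : ∀ r > 0, 0 ≤ u r) (hhalf : ∀ r ≥ r₀, u r ≤ 1 / 2)
    (hrec : ∀ r ≥ r₀, u r ≤ A * exp (-(r ^ κ) / C₀) + u (γ * r) ^ 2) :
    ∃ R, ∃ c > 0, ∀ r ≥ R, u r ≤ exp (-(c * r ^ κ)) := by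
  set ρ := γ⁻¹ ^ κ
  have hig : 1 ≤ γ⁻¹ := (one_le_inv₀ hγ0).mpr hγ1.le
  have hρ1 : 1 ≤ ρ := one_le_rpow hig hκ0.le
  set b := log 2
  have hb : 0 < b := log_pos one_lt_two
  set ε := 1 - exp (-((2 - ρ) * b))
  have hε : 0 < ε := sub_pos.mpr (exp_lt_one_iff.mpr (by nlinarith))
  obtain ⟨R, hRr₀, hR, hRκ⟩ : ∃ R, r₀ ≤ R ∧ 0 < R ∧ C₀ * (b + |log (A / ε)|) ≤ R ^ κ :=
    ((eventually_ge_atTop r₀).and ((eventually_gt_atTop 0).and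
      ((tendsto_rpow_atTop hκ0).eventually_ge_atTop _))).exists
  have hbase : ∀ r ≥ R, u r ≤ exp (-b) := fun r hr ↦ by
    rw [exp_neg, exp_log two_pos, ← one_div]; exact hhalf r (hRr₀.trans hr)
  have hforce : ∀ n : ℕ, ∀ r ≥ γ⁻¹ ^ (n + 1) * R,
      A * exp (-(r ^ κ) / C₀) ≤ ε * exp (-(b * ρ ^ (n + 1))) := by
    intro n r hr
    calc A * exp (-(r ^ κ) / C₀) ≤ A * exp (-(ρ ^ (n + 1) * R ^ κ) / C₀) := by
          gcongr
          rw [← pow_mul_rpow (inv_pos.mpr hγ0).le hR.le]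
          exact rpow_le_rpow (by positivity) hr hκ0.le
      _ ≤ ε * exp (-(b * ρ ^ (n + 1))) :=
          mul_exp_neg_le_mul_exp_neg hA hε hC₀ hRκ (one_le_pow₀ hρ1)
  have hscales := le_exp_neg_mul_pow_of_le_sq hγ0 hR hρ1 hρ.le hb.le hu0 hbase fun n r hr ↦ by
    have hRr : R ≤ r := (le_mul_of_one_le_left hR.le (one_le_pow₀ hig)).trans hr
    exact (hrec r (hRr₀.trans hRr)).trans (add_le_add (hforce n r hr) le_rfl)
  exact ⟨R, b / (ρ * R ^ κ), by positivity,
    le_exp_neg_mul_rpow_of_le_on_scales hγ0 hγ1 hκ0.le hR hb.le hscales⟩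

theorem exists_le_mul_exp_neg_rpow_div_of_le_one {θ : ℝ → ℝ} {κ A c R : ℝ} (hκ : 0 ≤ κ)
    (hc : 0 < c) (hθ1 : ∀ r > 0, θ r ≤ 1)
    (hlarge : ∀ r ≥ R, θ r ≤ A * exp (-(c * r ^ κ))) :
    ∃ C₁ > 0, ∀ r > 0, θ r ≤ C₁ * exp (-(r ^ κ) / C₁) := by
  set C₁ := max (max c⁻¹ A) (max (exp 1) (R ^ κ))
  have hC₁ : 0 < C₁ := by positivity
  refine ⟨C₁, hC₁, fun r hr ↦ ?_⟩
  rcases le_or_gt R r with hRr | hrR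
  · have hc1 : 1 ≤ c * C₁ := by
      rw [← mul_inv_cancel₀ hc.ne']; gcongr; exact le_max_of_le_left (le_max_left _ _)
    calc θ r ≤ A * exp (-(c * r ^ κ)) := hlarge r hRr
      _ ≤ C₁ * exp (-(r ^ κ) / C₁) := by
          gcongr
          · exact le_max_of_le_left (le_max_right _ _)
          · rw [neg_div, neg_le_neg_iff, div_le_iff₀ hC₁]
            nlinarith [rpow_nonneg hr.le κ]
  · have hsmall : r ^ κ ≤ C₁ :=
      (rpow_le_rpow hr.le hrR.le hκ).trans (le_max_of_le_right (le_max_right _ _))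
    calc θ r ≤ 1 := hθ1 r hr
      _ = exp 1 * exp (-1) := by rw [← exp_add]; simp
      _ ≤ C₁ * exp (-(r ^ κ) / C₁) := by
          gcongr
          · exact le_max_of_le_right (le_max_left _ _)
          · rw [neg_div, neg_le_neg_iff, div_le_one hC₁]; exact hsmall

theorem stmt5_general (γ κ C₀ M r₀ δ : ℝ) (hγ0 : 0 < γ) (hγ : γ < 1 / 2) (hκ0 : 0 < κ)
    (hκ : κ < Real.log 2 / |Real.log γ|)
    (hC₀ : 0 < C₀) (hM : 0 < M)
    (hMδ : M * δ ≤ 1 / 2)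
    (θ : ℝ → ℝ) (hθ : ∀ r > (0 : ℝ), 0 ≤ θ r ∧ θ r ≤ 1)
    (hap : ∀ r ≥ r₀, θ r ≤ δ)
    (hrec : ∀ r ≥ r₀, θ r ≤ C₀ * Real.exp (-(r ^ κ) / C₀) + M * θ (γ * r) ^ 2) :
    ∃ C₁ > (0 : ℝ), ∀ r > (0 : ℝ), θ r ≤ C₁ * Real.exp (-(r ^ κ) / C₁) := by
  have hγ1 : γ < 1 := by linarith
  obtain ⟨R, c, hc, hdecay⟩ := exists_le_exp_neg_mul_rpow_of_le_sq (u := fun r ↦ M * θ r)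
    hγ0 hγ1 hκ0 (inv_rpow_lt_two_of_lt_log_two_div hγ0 hγ1 hκ) (mul_pos hM hC₀) hC₀
    (fun r hr ↦ mul_nonneg hM.le (hθ r hr).1)
    (fun r hr ↦ (mul_le_mul_of_nonneg_left (hap r hr) hM.le).trans hMδ)
    (fun r hr ↦ (mul_le_mul_of_nonneg_left (hrec r hr) hM.le).trans_eq (by ring))
  refine exists_le_mul_exp_neg_rpow_div_of_le_one (R := R) (A := M⁻¹) hκ0.le hc
    (fun r hr ↦ (hθ r hr).2) fun r hr ↦ ?_
  rw [le_inv_mul_iff₀ hM]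
  exact hdecay r hr

/-- Exponential decay by induction on scales. -/
theorem stmt5 (γ κ C₀ M r₀ δ : ℝ) (hγ0 : 0 < γ) (hγ : γ < 1 / 2) (hκ0 : 0 < κ)
    (hκ : κ < Real.log 2 / |Real.log γ|)
    (hC₀ : 0 < C₀) (hM : 0 < M) (hr₀ : 0 < r₀) (hδ : 0 < δ)
    (hMδ : M * δ ≤ 1 / 2) (hδ1 : δ ≤ 1)
    (θ : ℝ → ℝ) (hθ : ∀ r > (0 : ℝ), 0 ≤ θ r ∧ θ r ≤ 1)
    (hap : ∀ r ≥ r₀, θ r ≤ δ)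
    (hrec : ∀ r ≥ r₀, θ r ≤ C₀ * Real.exp (-(r ^ κ) / C₀) + M * θ (γ * r) ^ 2) :
    ∃ C₁ > (0 : ℝ), ∀ r > (0 : ℝ), θ r ≤ C₁ * Real.exp (-(r ^ κ) / C₁) :=
  stmt5_general γ κ C₀ M r₀ δ hγ0 hγ hκ0 hκ hC₀ hM hMδ θ hθ hap hrec
end

section
/- Polynomial decay by induction on scales: let γ ∈ (0,1/2), κ > 0, and θ : (0,∞) → [0,1] satisfy θ(r) ≤ C_0 r^{−κ} + M θ(γr)^2 for all r ≥ r_0, together with θ(r) ≤ δ for all r ≥ r_0 where M·δ·γ^{−κ} ≤ 1/2 (smallness depending on κ, γ). Then there exists C_1 such that θ(r) ≤ C_1 r^{−κ} for all r > 0. -/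
/-!
Induction on scales. Below `R = r₀ / γ` the bound `θ r ≤ A r^{-κ}` holds trivially because
`θ ≤ 1` and `A ≥ R^κ`. Above `R`, the recursion and the a priori bound `θ(γr) ≤ δ` linearise the
quadratic term: `M θ(γr)² ≤ M δ θ(γr) ≤ M δ γ^{-κ} A r^{-κ} ≤ A r^{-κ} / 2`, so the bound at scale
`γ r` propagates to scale `r` as soon as `A ≥ 2 C₀`. Since `γ < 1`, every scale is reached from
`(0, R]` in finitely many steps.
-/

theorem forall_pos_of_scale_induction {P : ℝ → Prop} {γ R : ℝ} (hγ0 : 0 < γ) (hγ1 : γ < 1)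
    (hR : 0 < R) (base : ∀ r, 0 < r → r ≤ R → P r) (step : ∀ r, R < r → P (γ * r) → P r) :
    ∀ r, 0 < r → P r := by
  have layer : ∀ n : ℕ, ∀ r, 0 < r → r * γ ^ n ≤ R → P r := by
    intro n
    induction n with
    | zero => exact fun r hr h => base r hr (by simpa using h)
    | succ n ih =>
      intro r hr h
      rcases le_or_gt r R with hle | hlt
      · exact base r hr hle
      · refine step r hlt (ih (γ * r) (mul_pos hγ0 hr) ?_)
        calc γ * r * γ ^ n = r * γ ^ (n + 1) := by ring
          _ ≤ R := h
  intro r hr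
  obtain ⟨n, hn⟩ := exists_pow_lt_of_lt_one (div_pos hR hr) hγ1
  exact layer n r hr ((lt_div_iff₀' hr).mp hn).le

theorem one_le_rpow_mul_rpow_neg {r R κ : ℝ} (hr : 0 < r) (hrR : r ≤ R) (hκ : 0 ≤ κ) :
    1 ≤ R ^ κ * r ^ (-κ) := by
  rw [Real.rpow_neg hr.le, ← div_eq_mul_inv, one_le_div (Real.rpow_pos_of_pos hr κ)]
  exact Real.rpow_le_rpow hr.le hrR hκ

theorem le_of_quadratic_recursion {x t r γ κ C₀ M δ A : ℝ} (hγ : 0 < γ) (hr : 0 < r)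
    (hM : 0 ≤ M) (hMδ : 2 * M * δ ≤ γ ^ κ) (hA : 2 * C₀ ≤ A)
    (hx : x ≤ C₀ * r ^ (-κ) + M * t ^ 2) (ht : 0 ≤ t) (htδ : t ≤ δ)
    (htA : t ≤ A * (γ * r) ^ (-κ)) :
    x ≤ A * r ^ (-κ) := by
  have hs : 0 < r ^ (-κ) := Real.rpow_pos_of_pos hr _
  have hscale : A * (γ * r) ^ (-κ) = A * r ^ (-κ) / γ ^ κ := by
    rw [Real.mul_rpow hγ.le hr.le, Real.rpow_neg hγ.le]
    ring
  rw [hscale, le_div_iff₀ (Real.rpow_pos_of_pos hγ κ)] at htA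
  have hlin : M * t ^ 2 ≤ M * δ * t := by
    rw [sq, mul_assoc]
    exact mul_le_mul_of_nonneg_left (mul_le_mul_of_nonneg_right htδ ht) hM
  linarith [mul_le_mul_of_nonneg_right hMδ ht, mul_le_mul_of_nonneg_right hA hs.le]

theorem stmt6_general (γ κ C₀ M r₀ δ : ℝ) (hγ0 : 0 < γ) (hγ : γ < 1 / 2) (hκ0 : 0 < κ)
    (hM : 0 < M) (hr₀ : 0 < r₀)
    (hMδ : 2 * M * δ ≤ γ ^ κ)
    (θ : ℝ → ℝ) (hθ : ∀ r > (0 : ℝ), 0 ≤ θ r ∧ θ r ≤ 1)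
    (hap : ∀ r ≥ r₀, θ r ≤ δ)
    (hrec : ∀ r ≥ r₀, θ r ≤ C₀ * r ^ (-κ) + M * θ (γ * r) ^ 2) :
    ∃ C₁ > (0 : ℝ), ∀ r > (0 : ℝ), θ r ≤ C₁ * r ^ (-κ) := by
  have hγ1 : γ < 1 := by linarith
  have hR : 0 < r₀ / γ := div_pos hr₀ hγ0
  have hr₀R : r₀ ≤ r₀ / γ := le_div_self hr₀.le hγ0 hγ1.le
  set A := max (2 * C₀) ((r₀ / γ) ^ κ)
  refine ⟨A, (Real.rpow_pos_of_pos hR κ).trans_le (le_max_right _ _), ?_⟩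
  refine forall_pos_of_scale_induction hγ0 hγ1 hR (fun r hr hrR => ?_) (fun r hRr ih => ?_)
  · calc θ r ≤ 1 := (hθ r hr).2
      _ ≤ (r₀ / γ) ^ κ * r ^ (-κ) := one_le_rpow_mul_rpow_neg hr hrR hκ0.le
      _ ≤ A * r ^ (-κ) := by gcongr; exact le_max_right _ _
  · have hr : 0 < r := hR.trans hRr
    have hγr : r₀ ≤ γ * r := ((div_lt_iff₀' hγ0).mp hRr).le
    exact le_of_quadratic_recursion hγ0 hr hM.le hMδ (le_max_left _ _)
      (hrec r (hr₀R.trans hRr.le)) (hθ _ (mul_pos hγ0 hr)).1 (hap _ hγr) ih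

/-- Polynomial decay by induction on scales. -/
theorem stmt6 (γ κ C₀ M r₀ δ : ℝ) (hγ0 : 0 < γ) (hγ : γ < 1 / 2) (hκ0 : 0 < κ)
    (hC₀ : 0 < C₀) (hM : 0 < M) (hr₀ : 0 < r₀) (hδ : 0 < δ)
    (hMδ : 2 * M * δ ≤ γ ^ κ)
    (θ : ℝ → ℝ) (hθ : ∀ r > (0 : ℝ), 0 ≤ θ r ∧ θ r ≤ 1)
    (hap : ∀ r ≥ r₀, θ r ≤ δ)
    (hrec : ∀ r ≥ r₀, θ r ≤ C₀ * r ^ (-κ) + M * θ (γ * r) ^ 2) :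
    ∃ C₁ > (0 : ℝ), ∀ r > (0 : ℝ), θ r ≤ C₁ * r ^ (-κ) :=
  stmt6_general γ κ C₀ M r₀ δ hγ0 hγ hκ0 hM hr₀ hMδ θ hθ hap hrec
end

section
/- Union bound tail estimate for the dependence radius: let (R^y)_{y∈Z^d} be nonnegative random variables with P[R^y > ℓ] ≤ C_0 ℓ^{−(κ+d)} for all ℓ > 0, uniformly in y, for some C_0, κ > 0. Define for z ∈ Z^d, r > 0 the random variable R_r^z := inf{ℓ > 0 : R^y ≤ max(|z−y|−r, r+ℓ−|z−y|) for all y ∈ Z^d}. Then there exists C_1 (depending only on C_0, κ, d) such that P[R_r^z > 2ℓ] ≤ C_1 (1 + r/ℓ)^{d−1} ℓ^{−κ} for all r, ℓ > 0. -/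
/-!
On the event `𝓡_r^z > 2ℓ` some `R^y` exceeds `max (|z - y| - r) (r + 2ℓ - |z - y|)`, which equals
`ℓ + ||z - y| - s|` with `s = r + ℓ`. The union bound therefore reduces the claim to the lattice sum
`∑_y (ℓ + ||z - y| - s|)^{-(κ+d)}`. Grouping the `y` by `j = ⌊||z - y| - s|⌋`, the `j`-th group
lies in two spherical shells of width one and radius at most `s + j + 1`; disjoint balls of radius
`1/2` around lattice points give it at most `O((s + j)^{d-1}) ≤ O((s/ℓ)^{d-1} (ℓ + j)^{d-1})`
points, and `∑_j (ℓ + j)^{-κ-1} = O(ℓ^{-κ})` for `ℓ ≥ 1`. For `ℓ < 1` the bound exceeds one.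
-/

open MeasureTheory

/-- Euclidean distance between two points of the lattice `ℤ^d`. -/
noncomputable def normZ {d : ℕ} (z y : Fin d → ℤ) : ℝ :=
  ‖(show EuclideanSpace ℝ (Fin d) from WithLp.toLp 2 (fun i => ((z i - y i : ℤ) : ℝ)))‖

/-- The dependence radius `𝓡_r^z` built from the action radii `(R^y)_y`. -/
noncomputable def depRadius {d : ℕ} {Ω : Type*} (R : (Fin d → ℤ) → Ω → ℝ)
    (z : Fin d → ℤ) (r : ℝ) (ω : Ω) : ℝ :=
  sInf {ℓ : ℝ | 0 < ℓ ∧ ∀ y, R y ω ≤ max (normZ z y - r) (r + ℓ - normZ z y)}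

open Finset Metric Module

lemma mul_sub_mul_rpow_le_rpow_neg_sub_rpow_neg {β a b : ℝ} (hβ : 0 ≤ β) (ha : 0 < a)
    (hab : a ≤ b) : β * (b - a) * b ^ (-β - 1) ≤ a ^ (-β) - b ^ (-β) := by
  have hb : 0 < b := ha.trans_le hab
  have hab' : 0 < a / b := div_pos ha hb
  have tangent : 1 + β * (1 - a / b) ≤ (a / b) ^ (-β) := by
    rw [Real.rpow_def_of_pos hab']
    nlinarith [Real.add_one_le_exp (Real.log (a / b) * -β), Real.log_le_sub_one_of_pos hab']
  have hbβ : 0 < b ^ (-β) := Real.rpow_pos_of_pos hb _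
  calc β * (b - a) * b ^ (-β - 1) = b ^ (-β) * (β * (1 - a / b)) := by
        rw [Real.rpow_sub_one hb.ne']; field_simp
    _ ≤ b ^ (-β) * ((a / b) ^ (-β) - 1) := by gcongr; linarith
    _ = a ^ (-β) - b ^ (-β) := by
        rw [Real.div_rpow ha.le hb.le]; field_simp

lemma sum_add_natCast_rpow_le {β ℓ : ℝ} (hβ : 0 < β) (hℓ : 0 < ℓ) (J : Finset ℕ) :
    ∑ j ∈ J, (ℓ + j) ^ (-β - 1) ≤ ℓ ^ (-β - 1) + ℓ ^ (-β) / β := by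
  set N := J.sup id
  have hstep (i : ℕ) : (ℓ + (i + 1 : ℕ)) ^ (-β - 1) ≤
      ((ℓ + i) ^ (-β) - (ℓ + (i + 1 : ℕ)) ^ (-β)) / β := by
    rw [le_div_iff₀ hβ]
    have := mul_sub_mul_rpow_le_rpow_neg_sub_rpow_neg hβ.le (a := ℓ + i) (b := ℓ + (i + 1 : ℕ))
      (by positivity) (by push_cast; linarith)
    push_cast at this ⊢
    linarith
  calc ∑ j ∈ J, (ℓ + j) ^ (-β - 1) ≤ ∑ j ∈ range (N + 1), (ℓ + j) ^ (-β - 1) :=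
        sum_le_sum_of_subset_of_nonneg J.subset_range_sup_succ fun _ _ _ => by positivity
    _ = ℓ ^ (-β - 1) + ∑ i ∈ range N, (ℓ + (i + 1 : ℕ)) ^ (-β - 1) := by
        rw [sum_range_succ', add_comm]; simp
    _ ≤ ℓ ^ (-β - 1) + ∑ i ∈ range N, ((ℓ + i) ^ (-β) - (ℓ + (i + 1 : ℕ)) ^ (-β)) / β := by
        gcongr with i; exact hstep i
    _ ≤ ℓ ^ (-β - 1) + ℓ ^ (-β) / β := by
        rw [← sum_div, sum_range_sub' (fun i : ℕ => (ℓ + i) ^ (-β))]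
        gcongr
        simp only [Nat.cast_zero, add_zero, sub_le_self_iff]
        positivity

lemma pow_mul_rpow_neg_le {d : ℕ} (hd : 0 < d) {κ ℓ s t : ℝ} (hℓ : 1 ≤ ℓ) (hs : ℓ ≤ s)
    (ht : 0 ≤ t) :
    (s + t + 3 / 2) ^ (d - 1) * (ℓ + t) ^ (-(κ + d)) ≤
      (5 / 2 * (s / ℓ)) ^ (d - 1) * (ℓ + t) ^ (-κ - 1) := by
  have hℓt : 0 < ℓ + t := by positivity
  have hsℓ : 1 ≤ s / ℓ := (one_le_div (by positivity)).2 hs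
  have hbase : s + t + 3 / 2 ≤ 5 / 2 * (s / ℓ) * (ℓ + t) := by
    have : s / ℓ * ℓ = s := div_mul_cancel₀ s (by positivity)
    nlinarith
  calc (s + t + 3 / 2) ^ (d - 1) * (ℓ + t) ^ (-(κ + d))
      ≤ (5 / 2 * (s / ℓ) * (ℓ + t)) ^ (d - 1) * (ℓ + t) ^ (-(κ + d)) := by
        gcongr; linarith
    _ = (5 / 2 * (s / ℓ)) ^ (d - 1) * ((ℓ + t) ^ ((d - 1 : ℕ) : ℝ) * (ℓ + t) ^ (-(κ + d))) := by
        rw [Real.rpow_natCast, mul_pow, mul_assoc]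
    _ = (5 / 2 * (s / ℓ)) ^ (d - 1) * (ℓ + t) ^ (-κ - 1) := by
        rw [← Real.rpow_add hℓt, Nat.cast_pred hd]; ring_nf

lemma card_le_of_separated_of_norm_mem_Icc {E : Type*} [NormedAddCommGroup E] [NormedSpace ℝ E]
    [FiniteDimensional ℝ E] [Nontrivial E] {ι : Type*} {G : Finset ι} {x : ι → E}
    (hsep : (G : Set ι).Pairwise fun i j => 1 ≤ dist (x i) (x j)) {a : ℝ} (ha : 0 ≤ a)
    (hx : ∀ i ∈ G, ‖x i‖ ∈ Set.Icc a (a + 1)) :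
    (#G : ℝ) ≤ 2 ^ (finrank ℝ E + 1) * finrank ℝ E * (a + 3 / 2) ^ (finrank ℝ E - 1) := by
  borelize E
  set n := finrank ℝ E
  let μ : Measure E := Measure.addHaar
  set R := a + 3 / 2 with hR
  set ρ := max (a - 1 / 2) 0 with hρ
  have hρ0 : 0 ≤ ρ := le_max_right _ _
  have hρR : ρ ≤ R := max_le (by linarith) (by positivity)
  have hsub : ∀ i ∈ G, ball (x i) (1 / 2) ⊆ closedBall 0 R \ ball 0 ρ := by
    intro i hi u hu
    rw [mem_ball, dist_eq_norm] at hu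
    have hux := abs_le.1 ((abs_norm_sub_norm_le u (x i)).trans hu.le)
    simp only [Set.mem_sdiff, mem_closedBall_zero_iff, mem_ball_zero_iff, not_lt]
    exact ⟨by linarith [(hx i hi).2], max_le (by linarith [(hx i hi).1]) (norm_nonneg u)⟩
  have hdisj : (G : Set ι).PairwiseDisjoint fun i => ball (x i) (1 / 2) :=
    fun i hi j hj hij => ball_disjoint_ball (by linarith [hsep hi hj hij])
  have hball (y : E) {r : ℝ} (hr : 0 ≤ r) : μ.real (ball y r) = r ^ n * μ.real (ball 0 1) := by
    rw [← Measure.addHaar_real_closedBall_eq_addHaar_real_ball,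
      Measure.addHaar_real_closedBall μ y hr]
  have hm : 0 < μ.real (ball 0 1) :=
    ENNReal.toReal_pos (measure_ball_pos μ 0 one_pos).ne' measure_ball_lt_top.ne
  have hvol : #G * (1 / 2) ^ n * μ.real (ball 0 1) ≤ (R ^ n - ρ ^ n) * μ.real (ball 0 1) := by
    calc #G * (1 / 2) ^ n * μ.real (ball 0 1)
        = μ.real (⋃ i ∈ G, ball (x i) (1 / 2)) := by
          rw [measureReal_biUnion_finset hdisj (fun _ _ => measurableSet_ball),
            sum_congr rfl fun i _ => hball (x i) (by norm_num : (0:ℝ) ≤ 1 / 2), sum_const,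
            nsmul_eq_mul, mul_assoc]
      _ ≤ μ.real (closedBall 0 R \ ball 0 ρ) :=
          measureReal_mono (Set.iUnion₂_subset hsub)
            ((measure_mono Set.sdiff_subset).trans_lt measure_closedBall_lt_top).ne
      _ = (R ^ n - ρ ^ n) * μ.real (ball 0 1) := by
          rw [measureReal_sdiff (ball_subset_closedBall.trans (closedBall_subset_closedBall hρR))
            measurableSet_ball measure_closedBall_lt_top.ne,
            Measure.addHaar_real_closedBall μ 0 (by positivity), hball _ hρ0]
          ring
  have hpow : R ^ n - ρ ^ n ≤ 2 * n * R ^ (n - 1) := by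
    have h := (le_abs_self _).trans (abs_pow_sub_pow_le R ρ n)
    rw [abs_of_nonneg (sub_nonneg.2 hρR), abs_of_nonneg (hρ0.trans hρR), abs_of_nonneg hρ0,
      max_eq_left hρR] at h
    have hw : R - ρ ≤ 2 := by linarith [le_max_left (a - 1 / 2) 0]
    calc R ^ n - ρ ^ n ≤ (R - ρ) * n * R ^ (n - 1) := h
      _ ≤ 2 * n * R ^ (n - 1) := by gcongr
  have h := (le_of_mul_le_mul_right hvol hm).trans hpow
  rw [div_pow, one_pow, mul_one_div, div_le_iff₀ (by positivity)] at h
  rw [pow_succ]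
  linarith

noncomputable def latticePoint {d : ℕ} (v : Fin d → ℤ) : EuclideanSpace ℝ (Fin d) :=
  WithLp.toLp 2 fun i => (v i : ℝ)

lemma one_le_dist_latticePoint {d : ℕ} {v w : Fin d → ℤ} (hvw : v ≠ w) :
    1 ≤ dist (latticePoint v) (latticePoint w) := by
  obtain ⟨i, hi⟩ := Function.ne_iff.1 hvw
  have hvwi : (1 : ℝ) ≤ |(v i : ℝ) - w i| := by
    exact_mod_cast Int.one_le_abs (sub_ne_zero.2 hi)
  refine hvwi.trans ?_
  simpa [dist_eq_norm, latticePoint] using PiLp.norm_apply_le (latticePoint v - latticePoint w) i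

lemma card_le_of_normZ_mem_Icc {d : ℕ} (hd : 0 < d) (z : Fin d → ℤ) {G : Finset (Fin d → ℤ)}
    {a : ℝ} (ha : 0 ≤ a) (hG : ∀ y ∈ G, normZ z y ∈ Set.Icc a (a + 1)) :
    (#G : ℝ) ≤ 2 ^ (d + 1) * d * (a + 3 / 2) ^ (d - 1) := by
  have : Nonempty (Fin d) := ⟨⟨0, hd⟩⟩
  simpa using card_le_of_separated_of_norm_mem_Icc (x := fun y => latticePoint (z - y))
    (fun y _ y' _ h => one_le_dist_latticePoint (by simpa using h)) ha hG

lemma card_le_of_floor_abs_normZ_sub_eq {d : ℕ} (hd : 0 < d) (z : Fin d → ℤ) {s : ℝ}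
    (hs : 0 ≤ s) {j : ℕ} {G : Finset (Fin d → ℤ)} (hG : ∀ y ∈ G, ⌊|normZ z y - s|⌋₊ = j) :
    (#G : ℝ) ≤ 2 ^ (d + 2) * d * (s + j + 3 / 2) ^ (d - 1) := by
  have hshell : ∀ y ∈ G, (j : ℝ) ≤ |normZ z y - s| ∧ |normZ z y - s| < j + 1 := fun y hy =>
    (Nat.floor_eq_iff (abs_nonneg _)).1 (hG y hy)
  have houter := card_le_of_normZ_mem_Icc hd z (G := {y ∈ G | s ≤ normZ z y})
    (a := s + j) (by positivity) fun y hy => by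
      obtain ⟨hyG, hsy⟩ := mem_filter.1 hy
      have := hshell y hyG
      rw [abs_of_nonneg (sub_nonneg.2 hsy)] at this
      constructor <;> linarith
  have hinner := card_le_of_normZ_mem_Icc hd z (G := {y ∈ G | ¬ s ≤ normZ z y})
    (a := max (s - j - 1) 0) (le_max_right _ _) fun y hy => by
      obtain ⟨hyG, hsy⟩ := mem_filter.1 hy
      have := hshell y hyG
      rw [abs_of_neg (sub_neg.2 (not_le.1 hsy))] at this
      exact ⟨max_le (by linarith) (norm_nonneg _), by linarith [le_max_left (s - j - 1) 0]⟩
  have hmono : (max (s - j - 1) 0 + 3 / 2) ^ (d - 1) ≤ (s + j + 3 / 2) ^ (d - 1) := by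
    gcongr
    exact max_le (by linarith) (by positivity)
  have hc : (0 : ℝ) ≤ 2 ^ (d + 1) * d := by positivity
  rw [← card_filter_add_card_filter_not (fun y => s ≤ normZ z y), pow_succ]
  push_cast
  nlinarith [mul_le_mul_of_nonneg_left hmono hc]

lemma sum_rpow_add_abs_normZ_sub_le {d : ℕ} (hd : 0 < d) {κ ℓ s : ℝ} (hκ : 0 < κ)
    (hℓ : 1 ≤ ℓ) (hs : ℓ ≤ s) (z : Fin d → ℤ) (F : Finset (Fin d → ℤ)) :
    ∑ y ∈ F, (ℓ + |normZ z y - s|) ^ (-(κ + d)) ≤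
      2 ^ (d + 2) * d * (5 / 2) ^ (d - 1) * (1 + κ⁻¹) * (s / ℓ) ^ (d - 1) * ℓ ^ (-κ) := by
  have hℓ0 : 0 < ℓ := by positivity
  have hs0 : 0 ≤ s := by linarith
  set shell : (Fin d → ℤ) → ℕ := fun y => ⌊|normZ z y - s|⌋₊
  have htail : ∑ j ∈ F.image shell, (ℓ + j) ^ (-κ - 1) ≤ (1 + κ⁻¹) * ℓ ^ (-κ) := by
    have h1 : ℓ ^ (-κ - 1) ≤ ℓ ^ (-κ) := Real.rpow_le_rpow_of_exponent_le hℓ (by linarith)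
    have := sum_add_natCast_rpow_le hκ hℓ0 (F.image shell)
    rw [add_mul, one_mul, inv_mul_eq_div]
    linarith
  calc ∑ y ∈ F, (ℓ + |normZ z y - s|) ^ (-(κ + d))
      ≤ ∑ y ∈ F, (ℓ + shell y) ^ (-(κ + d)) := by
        refine sum_le_sum fun y _ => Real.rpow_le_rpow_of_nonpos (by positivity) ?_ (by linarith)
        gcongr
        exact Nat.floor_le (abs_nonneg _)
    _ = ∑ j ∈ F.image shell, #{y ∈ F | shell y = j} • (ℓ + j) ^ (-(κ + d)) :=
        sum_comp (fun j : ℕ => (ℓ + j) ^ (-(κ + d))) shell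
    _ ≤ ∑ j ∈ F.image shell,
          2 ^ (d + 2) * d * (s + j + 3 / 2) ^ (d - 1) * (ℓ + j) ^ (-(κ + d)) := by
        gcongr with j
        rw [nsmul_eq_mul]
        exact mul_le_mul_of_nonneg_right (card_le_of_floor_abs_normZ_sub_eq hd z hs0
          fun y hy => (mem_filter.1 hy).2) (by positivity)
    _ ≤ ∑ j ∈ F.image shell,
          2 ^ (d + 2) * d * ((5 / 2 * (s / ℓ)) ^ (d - 1) * (ℓ + j) ^ (-κ - 1)) := by
        refine sum_le_sum fun j _ => ?_
        rw [mul_assoc]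
        exact mul_le_mul_of_nonneg_left (pow_mul_rpow_neg_le hd hℓ hs (Nat.cast_nonneg j))
          (by positivity)
    _ = 2 ^ (d + 2) * d * (5 / 2 * (s / ℓ)) ^ (d - 1) *
          ∑ j ∈ F.image shell, (ℓ + j) ^ (-κ - 1) := by
        rw [mul_sum]; simp only [mul_assoc]
    _ ≤ 2 ^ (d + 2) * d * (5 / 2 * (s / ℓ)) ^ (d - 1) * ((1 + κ⁻¹) * ℓ ^ (-κ)) := by gcongr
    _ = 2 ^ (d + 2) * d * (5 / 2) ^ (d - 1) * (1 + κ⁻¹) * (s / ℓ) ^ (d - 1) * ℓ ^ (-κ) := by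
        rw [mul_pow]; ring

lemma measure_iUnion_le_ofReal_of_forall_sum_le {ι Ω : Type*} [Countable ι] [MeasurableSpace Ω]
    (μ : Measure Ω) {s : ι → Set Ω} {f : ι → ℝ} (hf : ∀ i, 0 ≤ f i)
    (hs : ∀ i, μ (s i) ≤ ENNReal.ofReal (f i)) {B : ℝ} (hB : ∀ F : Finset ι, ∑ i ∈ F, f i ≤ B) :
    μ (⋃ i, s i) ≤ ENNReal.ofReal B := by
  refine (measure_iUnion_le s).trans (ENNReal.summable.tsum_le_of_sum_le fun F => ?_)
  calc ∑ i ∈ F, μ (s i) ≤ ∑ i ∈ F, ENNReal.ofReal (f i) := sum_le_sum fun i _ => hs i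
    _ = ENNReal.ofReal (∑ i ∈ F, f i) := (ENNReal.ofReal_sum_of_nonneg fun i _ => hf i).symm
    _ ≤ ENNReal.ofReal B := ENNReal.ofReal_le_ofReal (hB F)

section DependenceRadius

variable {d : ℕ} {Ω : Type*} {R : (Fin d → ℤ) → Ω → ℝ} {z : Fin d → ℤ} {r ℓ : ℝ}

lemma depRadius_le {ω : Ω} (hℓ : 0 < ℓ)
    (h : ∀ y, R y ω ≤ max (normZ z y - r) (r + ℓ - normZ z y)) : depRadius R z r ω ≤ ℓ :=
  csInf_le ⟨0, fun _ h => h.1.le⟩ ⟨hℓ, h⟩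

lemma setOf_lt_depRadius_subset (hℓ : 0 < ℓ) :
    {ω | ℓ < depRadius R z r ω} ⊆
      ⋃ y, {ω | max (normZ z y - r) (r + ℓ - normZ z y) < R y ω} := by
  intro ω hω
  by_contra h
  simp only [Set.mem_iUnion, Set.mem_ofPred_eq, not_exists, not_lt] at h
  exact (depRadius_le hℓ h).not_gt hω

lemma measure_two_mul_lt_depRadius_le (hd : 0 < d) [MeasurableSpace Ω] (P : Measure Ω)
    {C₀ κ : ℝ} (hC₀ : 0 ≤ C₀) (hκ : 0 < κ)
    (htail : ∀ y, ∀ ℓ > (0 : ℝ), P {ω | ℓ < R y ω} ≤ ENNReal.ofReal (C₀ * ℓ ^ (-(κ + d))))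
    (hr : 0 ≤ r) (hℓ : 1 ≤ ℓ) :
    P {ω | 2 * ℓ < depRadius R z r ω} ≤ ENNReal.ofReal (C₀ *
      (2 ^ (d + 2) * d * (5 / 2) ^ (d - 1) * (1 + κ⁻¹) * ((r + ℓ) / ℓ) ^ (d - 1) * ℓ ^ (-κ))) := by
  have hmax (y : Fin d → ℤ) :
      max (normZ z y - r) (r + 2 * ℓ - normZ z y) = ℓ + |normZ z y - (r + ℓ)| := by
    rcases le_total (normZ z y) (r + ℓ) with h | h
    · rw [abs_of_nonpos (by linarith), max_eq_right (by linarith)]; ring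
    · rw [abs_of_nonneg (by linarith), max_eq_left (by linarith)]; ring
  refine (measure_mono (setOf_lt_depRadius_subset (by positivity))).trans ?_
  simp only [hmax]
  refine measure_iUnion_le_ofReal_of_forall_sum_le P (fun y => by positivity)
    (fun y => htail y _ (by positivity)) fun F => ?_
  rw [← mul_sum]
  exact mul_le_mul_of_nonneg_left
    (sum_rpow_add_abs_normZ_sub_le hd hκ hℓ (by linarith) z F) hC₀

end DependenceRadius

theorem stmt7_general {d : ℕ} (hd : 0 < d) {Ω : Type*} [MeasurableSpace Ω]
    (P : Measure Ω) [IsProbabilityMeasure P]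
    (R : (Fin d → ℤ) → Ω → ℝ)
    (C₀ κ : ℝ) (hC₀ : 0 < C₀) (hκ : 0 < κ)
    (htail : ∀ y : Fin d → ℤ, ∀ ℓ > (0 : ℝ),
      P {ω | ℓ < R y ω} ≤ ENNReal.ofReal (C₀ * ℓ ^ (-(κ + d)))) :
    ∃ C₁ > (0 : ℝ), ∀ (z : Fin d → ℤ) (r : ℝ), 0 < r → ∀ ℓ > (0 : ℝ),
      P {ω | 2 * ℓ < depRadius R z r ω} ≤
        ENNReal.ofReal (C₁ * (1 + r / ℓ) ^ ((d : ℝ) - 1) * ℓ ^ (-κ)) := by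
  set K : ℝ := 2 ^ (d + 2) * d * (5 / 2) ^ (d - 1) * (1 + κ⁻¹)
  refine ⟨max 1 (C₀ * K), by positivity, fun z r hr ℓ hℓ => ?_⟩
  have hpow : (1 + r / ℓ) ^ ((d : ℝ) - 1) = ((r + ℓ) / ℓ) ^ (d - 1) := by
    rw [← Nat.cast_pred hd, Real.rpow_natCast, add_div, div_self hℓ.ne', add_comm]
  rw [hpow]
  rcases lt_or_ge ℓ 1 with hℓ1 | hℓ1
  · refine prob_le_one.trans (ENNReal.one_le_ofReal.2 ?_)
    refine one_le_mul_of_one_le_of_one_le (one_le_mul_of_one_le_of_one_le (le_max_left _ _) ?_)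
      (Real.one_le_rpow_of_pos_of_le_one_of_nonpos hℓ hℓ1.le (by linarith))
    exact one_le_pow₀ ((one_le_div hℓ).2 (by linarith))
  · refine (measure_two_mul_lt_depRadius_le (z := z) hd P hC₀.le hκ htail hr.le hℓ1).trans
      (ENNReal.ofReal_le_ofReal ?_)
    calc C₀ * (K * ((r + ℓ) / ℓ) ^ (d - 1) * ℓ ^ (-κ))
        = C₀ * K * ((r + ℓ) / ℓ) ^ (d - 1) * ℓ ^ (-κ) := by ring
      _ ≤ max 1 (C₀ * K) * ((r + ℓ) / ℓ) ^ (d - 1) * ℓ ^ (-κ) := by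
          gcongr
          exact le_max_right _ _

/-- Union bound tail estimate for the dependence radius: polynomial tails
`P[R^y > ℓ] ≤ C₀ ℓ^{-(κ+d)}` imply `P[𝓡_r^z > 2ℓ] ≤ C₁ (1 + r/ℓ)^{d-1} ℓ^{-κ}`. -/
theorem stmt7 {d : ℕ} (hd : 0 < d) {Ω : Type*} [MeasurableSpace Ω]
    (P : Measure Ω) [IsProbabilityMeasure P]
    (R : (Fin d → ℤ) → Ω → ℝ) (hR0 : ∀ y ω, 0 ≤ R y ω)
    (C₀ κ : ℝ) (hC₀ : 0 < C₀) (hκ : 0 < κ)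
    (htail : ∀ y : Fin d → ℤ, ∀ ℓ > (0 : ℝ),
      P {ω | ℓ < R y ω} ≤ ENNReal.ofReal (C₀ * ℓ ^ (-(κ + d)))) :
    ∃ C₁ > (0 : ℝ), ∀ (z : Fin d → ℤ) (r : ℝ), 0 < r → ∀ ℓ > (0 : ℝ),
      P {ω | 2 * ℓ < depRadius R z r ω} ≤
        ENNReal.ofReal (C₁ * (1 + r / ℓ) ^ ((d : ℝ) - 1) * ℓ ^ (-κ)) :=
  stmt7_general hd P R C₀ κ hC₀ hκ htail
end
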